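/- arXiv:1401.6415 — 3 statements merged into one kernel-verified Lean document; each statement's English description precedes it below -/
import Mathlib

section
/- Let f ≥ 0 be integrable on [0,t] for each 0 < t < 1 and set d(t) = t + e − e·t. Then for all 0 < t < 1, ∫₀^{t/d(t)} f(x) dx ≤ ∫₀^t (1/(1−x))·(1/x)∫₀^x f(s) ds dx. -/
/-!
Write `w x = 1 / ((1 - x) x)`, whose primitive is `log (x / (1 - x))`. By Tonelli,
`∫₀ᵗ w(x) ∫₀ˣ f(s) ds dx = ∫₀ᵗ f(s) ∫ₛᵗ w(x) dx ds`, and for `s ≤ t / d(t)` the inner integral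
`log (t / (1 - t)) - log (s / (1 - s))` is at least `1`: the inequality `s ≤ t / d(t)` is exactly
`e s (1 - t) ≤ t (1 - s)`. Since `f ≥ 0`, the right-hand side therefore dominates `∫₀^{t/d(t)} f`.
-/

open MeasureTheory Set Function Real
open scoped ENNReal

theorem setLIntegral_Ioc_mul_setLIntegral_Ioc_swap {μ : Measure ℝ} [SFinite μ] {a b : ℝ}
    {F g : ℝ → ℝ≥0∞} (hF : AEMeasurable F (μ.restrict (Ioc a b)))
    (hg : AEMeasurable g (μ.restrict (Ioc a b))) :
    ∫⁻ x in Ioc a b, g x * ∫⁻ s in Ioc a x, F s ∂μ ∂μ =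
      ∫⁻ s in Ioc a b, F s * ∫⁻ x in Icc s b, g x ∂μ ∂μ := by
  set ν := μ.restrict (Ioc a b)
  let K : ℝ → ℝ → ℝ≥0∞ := fun x s =>
    {p : ℝ × ℝ | p.2 ≤ p.1}.indicator (fun p => g p.1 * F p.2) (x, s)
  have hK : AEMeasurable (uncurry K) (ν.prod ν) :=
    (hg.comp_fst.mul hF.comp_snd).indicator (measurableSet_le measurable_snd measurable_fst)
  calc ∫⁻ x in Ioc a b, g x * ∫⁻ s in Ioc a x, F s ∂μ ∂μ = ∫⁻ x, ∫⁻ s, K x s ∂ν ∂ν := by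
        refine setLIntegral_congr_fun measurableSet_Ioc fun x hx => ?_
        have hKx : K x = (Iic x).indicator fun s => g x * F s := rfl
        rw [hKx, lintegral_indicator measurableSet_Iic, Measure.restrict_restrict measurableSet_Iic,
          Iic_inter_Ioc_of_le hx.2,
          lintegral_const_mul'' _ (hF.mono_set (Ioc_subset_Ioc_right hx.2))]
    _ = ∫⁻ s, ∫⁻ x, K x s ∂ν ∂ν := lintegral_lintegral_swap hK
    _ = ∫⁻ s in Ioc a b, F s * ∫⁻ x in Icc s b, g x ∂μ ∂μ := by
        refine setLIntegral_congr_fun measurableSet_Ioc fun s hs => ?_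
        have hKs : (K · s) = (Ici s).indicator fun x => g x * F s := rfl
        have hIcc : Ici s ∩ Ioc a b = Icc s b := by
          ext x
          simp only [mem_inter_iff, mem_Ici, mem_Ioc, mem_Icc]
          constructor
          · rintro ⟨hsx, -, hxb⟩; exact ⟨hsx, hxb⟩
          · rintro ⟨hsx, hxb⟩; exact ⟨hsx, hs.1.trans_le hsx, hxb⟩
        rw [hKs, lintegral_indicator measurableSet_Ici, Measure.restrict_restrict measurableSet_Ici,
          hIcc, lintegral_mul_const'' _ (hg.mono_set (hIcc ▸ inter_subset_right)), mul_comm]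

theorem integral_one_div_one_sub_mul_one_div {a b : ℝ} (ha : 0 < a) (hab : a ≤ b) (hb : b < 1) :
    ∫ x in a..b, 1 / (1 - x) * (1 / x) = (log b - log (1 - b)) - (log a - log (1 - a)) := by
  have hmem {x : ℝ} (hx : x ∈ uIcc a b) : x ≠ 0 ∧ 1 - x ≠ 0 := by
    rw [uIcc_of_le hab] at hx
    exact ⟨(ha.trans_le hx.1).ne', (sub_pos.2 (hx.2.trans_lt hb)).ne'⟩
  refine intervalIntegral.integral_eq_sub_of_hasDerivAt (f := fun x => log x - log (1 - x))
    (fun x hx => ?_) (ContinuousOn.intervalIntegrable fun x hx => ?_)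
  · obtain ⟨hx0, hx1⟩ := hmem hx
    have h1 : HasDerivAt (fun y : ℝ => 1 - y) (-1) x := by
      simpa using (hasDerivAt_id x).const_sub 1
    refine ((hasDerivAt_log hx0).sub (h1.log hx1)).congr_deriv ?_
    field_simp
    ring
  · obtain ⟨hx0, hx1⟩ := hmem hx
    fun_prop (disch := assumption)

theorem lintegral_Icc_ofReal_one_div_one_sub_mul_one_div {a b : ℝ} (ha : 0 < a) (hab : a ≤ b)
    (hb : b < 1) :
    ∫⁻ x in Icc a b, ENNReal.ofReal (1 / (1 - x) * (1 / x)) =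
      ENNReal.ofReal ((log b - log (1 - b)) - (log a - log (1 - a))) := by
  have hpos : ∀ x ∈ Icc a b, 0 < 1 / (1 - x) * (1 / x) := fun x hx =>
    mul_pos (one_div_pos.2 (sub_pos.2 (hx.2.trans_lt hb))) (one_div_pos.2 (ha.trans_le hx.1))
  have hcont : ContinuousOn (fun x : ℝ => 1 / (1 - x) * (1 / x)) (Icc a b) := fun x hx => by
    have hx0 : x ≠ 0 := (ha.trans_le hx.1).ne'
    have hx1 : 1 - x ≠ 0 := (sub_pos.2 (hx.2.trans_lt hb)).ne'
    fun_prop (disch := assumption)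
  rw [← integral_one_div_one_sub_mul_one_div ha hab hb, intervalIntegral.integral_of_le hab,
    ← integral_Icc_eq_integral_Ioc, ofReal_integral_eq_lintegral_ofReal hcont.integrableOn_Icc]
  exact (ae_restrict_iff' measurableSet_Icc).2 (ae_of_all _ fun x hx => (hpos x hx).le)

theorem one_lt_add_exp_sub_exp_mul {t : ℝ} (ht : t < 1) : 1 < t + exp 1 - exp 1 * t := by
  nlinarith [mul_pos (sub_pos.2 (one_lt_exp_iff.2 one_pos)) (sub_pos.2 ht)]

theorem one_le_log_sub_log_of_le_div {s t : ℝ} (hs : 0 < s) (ht : t < 1)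
    (hst : s ≤ t / (t + exp 1 - exp 1 * t)) :
    1 ≤ (log t - log (1 - t)) - (log s - log (1 - s)) := by
  have hd := one_lt_add_exp_sub_exp_mul ht
  rw [le_div_iff₀ (one_pos.trans hd)] at hst
  have hst' : s < t := by nlinarith
  have key : exp 1 * s * (1 - t) ≤ t * (1 - s) := by nlinarith
  have ht0 : 0 < t := hs.trans hst'
  have hs1 : 0 < 1 - s := by linarith
  have ht1 : 0 < 1 - t := by linarith
  have hlog := log_le_log (by positivity) key
  rw [log_mul (by positivity) ht1.ne', log_mul (by positivity) hs.ne', log_exp,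
    log_mul ht0.ne' hs1.ne'] at hlog
  linarith

/-- Lemma 3: for `f ≥ 0` integrable on `[0,t]` for each `0 < t < 1` and
`d(t) = t + e - e·t`, one has
`∫₀^{t/d(t)} f ≤ ∫₀^t (1/(1-x))·(1/x)∫₀^x f(s) ds dx` for all `0 < t < 1`. -/
theorem stmt_2 (f : ℝ → ℝ) (hf : ∀ t, 0 ≤ f t)
    (hloc : ∀ t : ℝ, 0 < t → t < 1 → IntegrableOn f (Ioc 0 t))
    (t : ℝ) (ht0 : 0 < t) (ht1 : t < 1) :
    ENNReal.ofReal (∫ x in Ioc 0 (t / (t + Real.exp 1 - Real.exp 1 * t)), f x) ≤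
      ∫⁻ x in Ioc 0 t,
        ENNReal.ofReal ((1 / (1 - x)) * ((1 / x) * ∫ s in Ioc 0 x, f s)) := by
  set c := t / (t + exp 1 - exp 1 * t)
  have hd := one_lt_add_exp_sub_exp_mul ht1
  have hc0 : 0 < c := div_pos ht0 (one_pos.trans hd)
  have hct : c ≤ t := div_le_self ht0.le hd.le
  have hofReal : ∀ x, 0 < x → x < 1 →
      ENNReal.ofReal (∫ s in Ioc 0 x, f s) = ∫⁻ s in Ioc 0 x, ENNReal.ofReal (f s) :=
    fun x hx0 hx1 => ofReal_integral_eq_lintegral_ofReal (hloc x hx0 hx1) (ae_of_all _ hf)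
  have hkernel : ∀ s ∈ Ioc 0 c, 1 ≤ ∫⁻ x in Icc s t, ENNReal.ofReal (1 / (1 - x) * (1 / x)) :=
    fun s hs => by
      rw [lintegral_Icc_ofReal_one_div_one_sub_mul_one_div hs.1 (hs.2.trans hct) ht1]
      exact ENNReal.one_le_ofReal.2 (one_le_log_sub_log_of_le_div hs.1 ht1 hs.2)
  calc ENNReal.ofReal (∫ x in Ioc 0 c, f x) = ∫⁻ s in Ioc 0 c, ENNReal.ofReal (f s) :=
        hofReal c hc0 (hct.trans_lt ht1)
    _ ≤ ∫⁻ s in Ioc 0 c, ENNReal.ofReal (f s) *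
          ∫⁻ x in Icc s t, ENNReal.ofReal (1 / (1 - x) * (1 / x)) :=
        setLIntegral_mono' measurableSet_Ioc fun s hs => le_mul_of_one_le_right' (hkernel s hs)
    _ ≤ ∫⁻ s in Ioc 0 t, ENNReal.ofReal (f s) *
          ∫⁻ x in Icc s t, ENNReal.ofReal (1 / (1 - x) * (1 / x)) :=
        lintegral_mono_set (Ioc_subset_Ioc_right hct)
    _ = ∫⁻ x in Ioc 0 t, ENNReal.ofReal (1 / (1 - x) * (1 / x)) *
          ∫⁻ s in Ioc 0 x, ENNReal.ofReal (f s) :=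
        (setLIntegral_Ioc_mul_setLIntegral_Ioc_swap (hloc t ht0 ht1).aemeasurable.ennreal_ofReal
          (by fun_prop)).symm
    _ = _ := setLIntegral_congr_fun measurableSet_Ioc fun x hx => by
        have hw : 0 ≤ 1 / (1 - x) * (1 / x) :=
          (mul_pos (one_div_pos.2 (sub_pos.2 (hx.2.trans_lt ht1))) (one_div_pos.2 hx.1)).le
        rw [← hofReal x hx.1 (hx.2.trans_lt ht1), ← ENNReal.ofReal_mul hw, mul_assoc]
end

section
/- Let σ(t) = t/(t + e − e·t) and define T h(t) = h(σ(t)) for measurable h on [0,1]. Then for every integrable h ≥ 0, ∫₀¹ h(σ(x))/(1−x) dx ≤ e·∫₀¹ h(u)/(1−u) du. -/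
/-!
The map `σ_a t = t / (t + a - a t)` is a Möbius transformation of `(0,1)` fixing `0` and `1`,
with `σ_a ∘ σ_b = σ_(ab)`; so `σ_e` has inverse `σ_(1/e)`. Substituting `x = σ_(1/e) u`
turns `dx / (1 - x)` into `du / ((1 - u) (u + (1 - u)/e))`, and `u + (1 - u)/e ≥ 1/e`.
-/

open MeasureTheory Set

noncomputable def mobius (a t : ℝ) : ℝ := t / (t + a - a * t)

section Mobius

variable {a b t : ℝ}

lemma mobius_denom_pos (ha : 0 < a) (ht : t ∈ Ioo 0 1) : 0 < t + a - a * t := by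
  obtain ⟨h0, h1⟩ := ht
  nlinarith

lemma mobius_mem_Ioo (ha : 0 < a) (ht : t ∈ Ioo 0 1) : mobius a t ∈ Ioo 0 1 := by
  have hD := mobius_denom_pos ha ht
  obtain ⟨h0, h1⟩ := ht
  exact ⟨div_pos h0 hD, (div_lt_one hD).2 (by nlinarith)⟩

lemma mobius_mobius (hD : t + b - b * t ≠ 0) : mobius a (mobius b t) = mobius (a * b) t := by
  have hden : mobius b t + a - a * mobius b t = (t + a * b - a * b * t) / (t + b - b * t) := by
    rw [mobius, eq_div_iff hD]
    simp only [sub_mul, add_mul, mul_assoc, div_mul_cancel₀ _ hD]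
    ring
  rw [mobius, hden, mobius, div_div_div_cancel_right₀ hD]
  rfl

lemma mobius_mobius_of_mul_eq_one (hab : a * b = 1) (hD : t + b - b * t ≠ 0) :
    mobius a (mobius b t) = t := by
  rw [mobius_mobius hD, hab, mobius]
  ring_nf

lemma bijOn_mobius (ha : 0 < a) : BijOn (mobius a) (Ioo 0 1) (Ioo 0 1) := by
  have ha' := inv_pos.2 ha
  refine InvOn.bijOn ⟨fun t ht => ?_, fun t ht => ?_⟩ (fun t => mobius_mem_Ioo ha)
    (fun t => mobius_mem_Ioo ha')
  · exact mobius_mobius_of_mul_eq_one (inv_mul_cancel₀ ha.ne') (mobius_denom_pos ha ht).ne'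
  · exact mobius_mobius_of_mul_eq_one (mul_inv_cancel₀ ha.ne') (mobius_denom_pos ha' ht).ne'

lemma hasDerivAt_mobius (hD : t + a - a * t ≠ 0) :
    HasDerivAt (mobius a) (a / (t + a - a * t) ^ 2) t := by
  have hden : HasDerivAt (fun t => t + a - a * t) (1 - a * 1) t :=
    ((hasDerivAt_id' t).add_const a).sub ((hasDerivAt_id' t).const_mul a)
  refine ((hasDerivAt_id' t).div hden hD).congr_deriv ?_
  congr 1
  ring

lemma one_sub_mobius (hD : t + a - a * t ≠ 0) :
    1 - mobius a t = a * (1 - t) / (t + a - a * t) := by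
  rw [mobius, one_sub_div hD]
  ring_nf

end Mobius

theorem lintegral_Ioo_eq_lintegral_comp_mobius {a : ℝ} (ha : 0 < a) (F : ℝ → ENNReal) :
    ∫⁻ x in Ioo 0 1, F x =
      ∫⁻ t in Ioo 0 1, ENNReal.ofReal (a / (t + a - a * t) ^ 2) * F (mobius a t) := by
  have hbij := bijOn_mobius ha
  conv_lhs => rw [← hbij.image_eq]
  rw [lintegral_image_eq_lintegral_abs_deriv_mul measurableSet_Ioo
    (fun t ht => (hasDerivAt_mobius (mobius_denom_pos ha ht).ne').hasDerivWithinAt) hbij.injOn]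
  refine setLIntegral_congr_fun measurableSet_Ioo fun t _ => ?_
  rw [abs_of_nonneg (by positivity)]

lemma deriv_mobius_mul_div_one_sub_mobius_le {b y t : ℝ} (hb : 0 < b) (hb1 : b ≤ 1)
    (hy : 0 ≤ y) (ht : t ∈ Ioo 0 1) :
    b / (t + b - b * t) ^ 2 * (y / (1 - mobius b t)) ≤ b⁻¹ * (y / (1 - t)) := by
  have hD := mobius_denom_pos hb ht
  have h1t : 0 < 1 - t := sub_pos.2 ht.2
  rw [one_sub_mobius hD.ne']
  calc b / (t + b - b * t) ^ 2 * (y / (b * (1 - t) / (t + b - b * t)))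
      = y / (1 - t) / (t + b - b * t) := by field_simp
    _ ≤ y / (1 - t) / b := div_le_div_of_nonneg_left (by positivity) hb (by nlinarith [ht.1])
    _ = b⁻¹ * (y / (1 - t)) := div_eq_inv_mul _ _

theorem lintegral_comp_mobius_div_one_sub_le {c : ℝ} (hc : 1 ≤ c) {h : ℝ → ℝ}
    (hh : ∀ x, 0 ≤ h x) :
    ∫⁻ x in Ioo 0 1, ENNReal.ofReal (h (mobius c x) / (1 - x)) ≤
      ENNReal.ofReal c * ∫⁻ u in Ioo 0 1, ENNReal.ofReal (h u / (1 - u)) := by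
  have hc0 : 0 < c := zero_lt_one.trans_le hc
  have hc0' : 0 < c⁻¹ := inv_pos.2 hc0
  rw [lintegral_Ioo_eq_lintegral_comp_mobius hc0',
    ← lintegral_const_mul' _ _ ENNReal.ofReal_ne_top]
  refine setLIntegral_mono' measurableSet_Ioo fun u hu => ?_
  rw [mobius_mobius_of_mul_eq_one (mul_inv_cancel₀ hc0.ne') (mobius_denom_pos hc0' hu).ne',
    ← ENNReal.ofReal_mul (by positivity), ← ENNReal.ofReal_mul hc0.le]
  refine ENNReal.ofReal_le_ofReal ?_
  simpa only [inv_inv] using deriv_mobius_mul_div_one_sub_mobius_le hc0'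
    (inv_le_one_of_one_le₀ hc) (hh u) hu

theorem stmt_6_general (h : ℝ → ℝ) (hh : ∀ x, 0 ≤ h x) :
    ∫⁻ x in Ioo (0:ℝ) 1,
        ENNReal.ofReal (h (x / (x + Real.exp 1 - Real.exp 1 * x)) / (1 - x)) ≤
      ENNReal.ofReal (Real.exp 1) *
        ∫⁻ u in Ioo (0:ℝ) 1, ENNReal.ofReal (h u / (1 - u)) :=
  lintegral_comp_mobius_div_one_sub_le (Real.one_le_exp zero_le_one) hh

/-- The composition operator `Th = h ∘ σ`, `σ(t) = t/(t + e - e·t)`, is bounded with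
norm at most `e` on `L¹(1/(1-x))` on `[0,1]`: for every integrable `h ≥ 0`,
`∫₀¹ h(σ(x))/(1-x) dx ≤ e·∫₀¹ h(u)/(1-u) du`. -/
theorem stmt_6 (h : ℝ → ℝ) (hh : ∀ x, 0 ≤ h x)
    (hint : IntegrableOn h (Icc 0 1)) :
    ∫⁻ x in Ioo (0:ℝ) 1,
        ENNReal.ofReal (h (x / (x + Real.exp 1 - Real.exp 1 * x)) / (1 - x)) ≤
      ENNReal.ofReal (Real.exp 1) *
        ∫⁻ u in Ioo (0:ℝ) 1, ENNReal.ofReal (h u / (1 - u)) :=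
  stmt_6_general h hh
end

section
/- Let α < 0 and f ≥ 0 measurable on [0,1] with ∫₀¹ (1−t) f(t) t^α dt < ∞. Then ∫₀¹ x^{α−1} ∫₀^x f(t) dt dx ≤ (max(1,−α)/(−α)) ∫₀¹ (1−t) f(t) t^α dt. -/
/-!
Swapping the order of integration (Tonelli) turns the left side into
`∫₀¹ f(t) ∫ₜ¹ x^(α-1) dx dt = ∫₀¹ f(t) (t^α - 1)/(-α) dt`. Writing `β = -α`, the weight satisfies
`(t^α - 1)/β = t^α (1 - t^β)/β ≤ (max 1 β / β) (1 - t) t^α`, by the Bernoulli-type bound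
`1 - t^β ≤ max 1 β · (1 - t)` on `[0, 1]`: for `β ≤ 1` it follows from `t ≤ t^β`, for `β ≥ 1`
from Bernoulli's inequality.
-/

open MeasureTheory Set ENNReal

theorem one_sub_rpow_le_max_mul {β t : ℝ} (ht : 0 ≤ t) (ht1 : t ≤ 1) :
    1 - t ^ β ≤ max 1 β * (1 - t) := by
  rcases le_total β 1 with hβ | hβ
  · have : t ≤ t ^ β := Real.self_le_rpow_of_le_one ht ht1 hβ
    nlinarith [le_max_left 1 β]
  · have : 1 + β * (t - 1) ≤ (1 + (t - 1)) ^ β :=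
      one_add_mul_self_le_rpow_one_add (by linarith) hβ
    rw [add_sub_cancel] at this
    rw [max_eq_right hβ]
    linarith

theorem one_sub_rpow_div_le {α t : ℝ} (hα : α < 0) (ht : 0 < t) (ht1 : t ≤ 1) :
    (1 - t ^ α) / α ≤ max 1 (-α) / (-α) * ((1 - t) * t ^ α) := by
  have hβ : 0 < -α := neg_pos.2 hα
  calc (1 - t ^ α) / α = t ^ α * (1 - t ^ (-α)) / (-α) := by
        rw [mul_one_sub, ← Real.rpow_add ht, add_neg_cancel, Real.rpow_zero, div_neg,
          ← neg_div, neg_sub]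
    _ ≤ t ^ α * (max 1 (-α) * (1 - t)) / (-α) := by
        gcongr
        exact one_sub_rpow_le_max_mul ht.le ht1
    _ = max 1 (-α) / (-α) * ((1 - t) * t ^ α) := by ring

theorem lintegral_Ico_rpow_sub_one {α t : ℝ} (hα : α ≠ 0) (ht : 0 < t) (ht1 : t ≤ 1) :
    ∫⁻ x in Ico t 1, ENNReal.ofReal (x ^ (α - 1)) = ENNReal.ofReal ((1 - t ^ α) / α) := by
  have hzero : (0 : ℝ) ∉ uIcc t 1 := by
    rw [uIcc_of_le ht1]
    exact fun h => (not_le.2 ht) h.1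
  have hint : IntegrableOn (fun x : ℝ => x ^ (α - 1)) (Ioc t 1) :=
    (intervalIntegrable_iff_integrableOn_Ioc_of_le ht1).1
      (intervalIntegral.intervalIntegrable_rpow (Or.inr hzero))
  rw [Measure.restrict_congr_set Ico_ae_eq_Ioc, ← ofReal_integral_eq_lintegral_ofReal hint
    ((ae_restrict_iff' measurableSet_Ioc).2 (ae_of_all _ fun x hx =>
      Real.rpow_nonneg (ht.trans hx.1).le _)), ← intervalIntegral.integral_of_le ht1,
    integral_rpow (Or.inr ⟨by simpa [sub_eq_add_neg] using hα, hzero⟩), sub_add_cancel,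
    Real.one_rpow]

theorem lintegral_mul_setLIntegral_inter_Iic_comm {μ : Measure ℝ} [SFinite μ]
    {w g : ℝ → ℝ≥0∞} (hw : Measurable w) (hg : Measurable g) (s : Set ℝ) :
    ∫⁻ x in s, w x * ∫⁻ t in s ∩ Iic x, g t ∂μ ∂μ =
      ∫⁻ t in s, g t * ∫⁻ x in s ∩ Ici t, w x ∂μ ∂μ := by
  have hK : Measurable fun p : ℝ × ℝ => {p : ℝ × ℝ | p.2 ≤ p.1}.indicator
      (fun p => w p.1 * g p.2) p :=
    ((hw.comp measurable_fst).mul (hg.comp measurable_snd)).indicator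
      (measurableSet_le measurable_snd measurable_fst)
  calc ∫⁻ x in s, w x * ∫⁻ t in s ∩ Iic x, g t ∂μ ∂μ
      = ∫⁻ x in s, ∫⁻ t in s, (Iic x).indicator (fun t => w x * g t) t ∂μ ∂μ := by
        congr! 2 with x
        rw [lintegral_indicator measurableSet_Iic, Measure.restrict_restrict measurableSet_Iic,
          inter_comm, lintegral_const_mul _ hg]
    _ = ∫⁻ t in s, ∫⁻ x in s, (Ici t).indicator (fun x => w x * g t) x ∂μ ∂μ :=
        lintegral_lintegral_swap hK.aemeasurable
    _ = ∫⁻ t in s, g t * ∫⁻ x in s ∩ Ici t, w x ∂μ ∂μ := by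
        congr! 2 with t
        rw [lintegral_indicator measurableSet_Ici, Measure.restrict_restrict measurableSet_Ici,
          inter_comm, lintegral_mul_const _ hw, mul_comm]

theorem stmt_13_general (α : ℝ) (hα : α < 0) (f : ℝ → ℝ) (hmeas : Measurable f)
    (hf : ∀ t, 0 ≤ f t) :
    ∫⁻ x in Ioo (0:ℝ) 1, ENNReal.ofReal (x ^ (α - 1) * ∫ t in Ioc 0 x, f t) ≤
      ENNReal.ofReal (max 1 (-α) / (-α)) *
        ∫⁻ t in Ioo (0:ℝ) 1, ENNReal.ofReal ((1 - t) * f t * t ^ α) := by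
  calc ∫⁻ x in Ioo (0:ℝ) 1, ENNReal.ofReal (x ^ (α - 1) * ∫ t in Ioc 0 x, f t)
      ≤ ∫⁻ x in Ioo (0:ℝ) 1,
          ENNReal.ofReal (x ^ (α - 1)) * ∫⁻ t in Ioo 0 1 ∩ Iic x, ENNReal.ofReal (f t) := by
        refine setLIntegral_mono' measurableSet_Ioo fun x hx => ?_
        have hIoc : Ioo 0 1 ∩ Iic x = Ioc 0 x :=
          Set.ext fun t => ⟨fun h => ⟨h.1.1, h.2⟩, fun h => ⟨⟨h.1, h.2.trans_lt hx.2⟩, h.2⟩⟩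
        rw [ENNReal.ofReal_mul (Real.rpow_nonneg hx.1.le _), hIoc,
          integral_eq_lintegral_of_nonneg_ae (ae_of_all _ hf) hmeas.aestronglyMeasurable]
        gcongr
        exact ofReal_toReal_le
    _ = ∫⁻ t in Ioo (0:ℝ) 1,
          ENNReal.ofReal (f t) * ∫⁻ x in Ioo 0 1 ∩ Ici t, ENNReal.ofReal (x ^ (α - 1)) :=
        lintegral_mul_setLIntegral_inter_Iic_comm (by fun_prop) hmeas.ennreal_ofReal _
    _ ≤ ∫⁻ t in Ioo (0:ℝ) 1,
          ENNReal.ofReal (max 1 (-α) / (-α)) * ENNReal.ofReal ((1 - t) * f t * t ^ α) := by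
        refine setLIntegral_mono' measurableSet_Ioo fun t ht => ?_
        have hIco : Ioo 0 1 ∩ Ici t = Ico t 1 :=
          Set.ext fun x => ⟨fun h => ⟨h.2, h.1.2⟩, fun h => ⟨⟨ht.1.trans_le h.1, h.2⟩, h.1⟩⟩
        rw [hIco, lintegral_Ico_rpow_sub_one hα.ne ht.1 ht.2.le, ← ENNReal.ofReal_mul (hf t),
          ← ENNReal.ofReal_mul (div_nonneg (zero_le_one.trans (le_max_left _ _)) (by linarith))]
        refine ENNReal.ofReal_le_ofReal ?_
        calc f t * ((1 - t ^ α) / α)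
            ≤ f t * (max 1 (-α) / (-α) * ((1 - t) * t ^ α)) :=
              mul_le_mul_of_nonneg_left (one_sub_rpow_div_le hα ht.1 ht.2.le) (hf t)
          _ = max 1 (-α) / (-α) * ((1 - t) * f t * t ^ α) := by ring
    _ = ENNReal.ofReal (max 1 (-α) / (-α)) *
          ∫⁻ t in Ioo (0:ℝ) 1, ENNReal.ofReal ((1 - t) * f t * t ^ α) :=
        lintegral_const_mul' _ _ ofReal_ne_top

/-- Case `p = 1` of the improved weighted Hardy inequality on `[0,1]`: for `α < 0`
and measurable `f ≥ 0` with `∫₀¹ (1-t) f(t) t^α dt < ∞`,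
`∫₀¹ x^{α-1} ∫₀^x f(t) dt dx ≤ (max(1,-α)/(-α)) ∫₀¹ (1-t) f(t) t^α dt`. -/
theorem stmt_13 (α : ℝ) (hα : α < 0) (f : ℝ → ℝ) (hmeas : Measurable f)
    (hf : ∀ t, 0 ≤ f t)
    (hfin : ∫⁻ t in Ioo (0:ℝ) 1, ENNReal.ofReal ((1 - t) * f t * t ^ α) ≠ ⊤) :
    ∫⁻ x in Ioo (0:ℝ) 1, ENNReal.ofReal (x ^ (α - 1) * ∫ t in Ioc 0 x, f t) ≤
      ENNReal.ofReal (max 1 (-α) / (-α)) *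
        ∫⁻ t in Ioo (0:ℝ) 1, ENNReal.ofReal ((1 - t) * f t * t ^ α) :=
  stmt_13_general α hα f hmeas hf
end
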